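/- Let a_{XX}, a_Z, a_X ∈ ℝ with 0 ≤ a_{XX} ≤ 1, 0 < a_Z < 1, a_X > 0, and assume a_X ≥ a_Z and 2(a_Z − a_X)² ≥ (a_{XX} + 1)². Set β = diag(a_{XX}, 0, 1) and S = P = (−a_X, 0, a_Z) ∈ ℝ³ (the data of the two-qubit Hamiltonian H = a_Z(Z₁+Z₂) − a_X(X₁+X₂) + a_{XX} X₁X₂ + Z₁Z₂). Then there exist O₁, O₂ ∈ SO(3) such that the triple (O₁βO₂ᵀ, O₁S, O₂P) satisfies the Z-matrix coefficient conditions; in particular H is stoquastic. -/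
import Mathlib


open Matrix

/-- `O` is a real 3×3 special orthogonal matrix. -/
def IsSO3 (O : Matrix (Fin 3) (Fin 3) ℝ) : Prop := O * Oᵀ = 1 ∧ O.det = 1

/-- The triple `(β, S, P)` parametrizing a two-qubit Hamiltonian satisfies the
symmetric-Z-matrix coefficient conditions. -/
def ZCond (β : Matrix (Fin 3) (Fin 3) ℝ) (S P : Fin 3 → ℝ) : Prop :=
  β 0 1 = 0 ∧ β 1 0 = 0 ∧ β 1 2 = 0 ∧ β 2 1 = 0 ∧ S 1 = 0 ∧ P 1 = 0 ∧
  β 0 0 ≤ -|β 1 1| ∧ P 0 ≤ -|β 2 0| ∧ S 0 ≤ -|β 0 2|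

set_option maxHeartbeats 1000000 in
theorem counterexample_stoquastic_by_non_clifford_rotations
    (aXX aZ aX : ℝ) (h0 : 0 ≤ aXX) (h1 : aXX ≤ 1) (h2 : 0 < aZ) (h3 : aZ < 1)
    (h4 : 0 < aX) (h5 : aZ ≤ aX) (h6 : (aXX + 1) ^ 2 ≤ 2 * (aZ - aX) ^ 2) :
    ∃ O₁ O₂ : Matrix (Fin 3) (Fin 3) ℝ, IsSO3 O₁ ∧ IsSO3 O₂ ∧
      ZCond (O₁ * Matrix.diagonal ![aXX, 0, 1] * O₂ᵀ)
        (O₁ *ᵥ ![-aX, 0, aZ]) (O₂ *ᵥ ![-aX, 0, aZ]) := by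
  set c : ℝ := Real.sqrt 2 / 2 with hc
  have hs2 : Real.sqrt 2 * Real.sqrt 2 = 2 := Real.mul_self_sqrt (by norm_num)
  have hcc : c * c = 1 / 2 := by rw [hc, div_mul_div_comm, hs2]; norm_num
  have hcpos : 0 < c := by
    rw [hc]; positivity
  -- key inequality: aXX + 1 ≤ √2 * (aX - aZ)
  have hkey : aXX + 1 ≤ Real.sqrt 2 * (aX - aZ) := by
    have h7 : (aXX + 1) ^ 2 ≤ (Real.sqrt 2 * (aX - aZ)) ^ 2 := by
      nlinarith [hs2]
    have h8 : (0:ℝ) ≤ aXX + 1 := by linarith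
    have h9 : (0:ℝ) ≤ Real.sqrt 2 * (aX - aZ) := by
      have := Real.sqrt_nonneg 2; nlinarith
    nlinarith [h7, h8, h9, sq_nonneg (Real.sqrt 2 * (aX - aZ) + (aXX + 1))]
  have hT1 : (!![c, 0, -c; 0, 1, 0; c, 0, c])ᵀ = !![c, 0, c; 0, 1, 0; -c, 0, c] := by
    ext i j; fin_cases i <;> fin_cases j <;> rfl
  have hT2 : (!![c, 0, c; 0, 1, 0; -c, 0, c])ᵀ = !![c, 0, -c; 0, 1, 0; c, 0, c] := by
    ext i j; fin_cases i <;> fin_cases j <;> rfl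
  refine ⟨!![c, 0, -c; 0, 1, 0; c, 0, c], !![c, 0, c; 0, 1, 0; -c, 0, c], ?_, ?_, ?_⟩
  · constructor
    · rw [hT1]
      ext i j
      fin_cases i <;> fin_cases j <;>
        simp [Matrix.mul_apply, Fin.sum_univ_three, Matrix.one_apply] <;> nlinarith [hcc]
    · rw [Matrix.det_fin_three]; simp; nlinarith [hcc]
  · constructor
    · rw [hT2]
      ext i j
      fin_cases i <;> fin_cases j <;>
        simp [Matrix.mul_apply, Fin.sum_univ_three, Matrix.one_apply] <;> nlinarith [hcc]
    · rw [Matrix.det_fin_three]; simp; nlinarith [hcc]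
  · rw [hT2]
    have e00 : (!![c, 0, -c; 0, 1, 0; c, 0, c] * Matrix.diagonal ![aXX, 0, 1] *
        !![c, 0, -c; 0, 1, 0; c, 0, c]) 0 0 = c * c * (aXX - 1) := by
      simp [Matrix.mul_apply, Fin.sum_univ_three, Matrix.diagonal_apply, Matrix.vecMul_diagonal, Matrix.vecHead, Matrix.vecTail, Function.comp]; ring
    have e11 : (!![c, 0, -c; 0, 1, 0; c, 0, c] * Matrix.diagonal ![aXX, 0, 1] *
        !![c, 0, -c; 0, 1, 0; c, 0, c]) 1 1 = 0 := by
      simp [Matrix.mul_apply, Fin.sum_univ_three, Matrix.diagonal_apply, Matrix.vecMul_diagonal, Matrix.vecHead, Matrix.vecTail, Function.comp]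
    have e02 : (!![c, 0, -c; 0, 1, 0; c, 0, c] * Matrix.diagonal ![aXX, 0, 1] *
        !![c, 0, -c; 0, 1, 0; c, 0, c]) 0 2 = -(c * c * (aXX + 1)) := by
      simp [Matrix.mul_apply, Fin.sum_univ_three, Matrix.diagonal_apply, Matrix.vecMul_diagonal, Matrix.vecHead, Matrix.vecTail, Function.comp]; ring
    have e20 : (!![c, 0, -c; 0, 1, 0; c, 0, c] * Matrix.diagonal ![aXX, 0, 1] *
        !![c, 0, -c; 0, 1, 0; c, 0, c]) 2 0 = c * c * (aXX + 1) := by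
      simp [Matrix.mul_apply, Fin.sum_univ_three, Matrix.diagonal_apply, Matrix.vecMul_diagonal, Matrix.vecHead, Matrix.vecTail, Function.comp]; ring
    have habs : c * c * (aXX + 1) = |c * c * (aXX + 1)| := by
      rw [abs_of_nonneg]; nlinarith [hcc]
    refine ⟨?_, ?_, ?_, ?_, ?_, ?_, ?_, ?_, ?_⟩
    · simp [Matrix.mul_apply, Fin.sum_univ_three, Matrix.diagonal_apply, Matrix.vecMul_diagonal, Matrix.vecHead, Matrix.vecTail, Function.comp]; try ring
    · simp [Matrix.mul_apply, Fin.sum_univ_three, Matrix.diagonal_apply, Matrix.vecMul_diagonal, Matrix.vecHead, Matrix.vecTail, Function.comp]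
    · simp [Matrix.mul_apply, Fin.sum_univ_three, Matrix.diagonal_apply, Matrix.vecMul_diagonal, Matrix.vecHead, Matrix.vecTail, Function.comp]
    · simp [Matrix.mul_apply, Fin.sum_univ_three, Matrix.diagonal_apply, Matrix.vecMul_diagonal, Matrix.vecHead, Matrix.vecTail, Function.comp]
    · simp [Matrix.mulVec, dotProduct, Fin.sum_univ_three]
    · simp [Matrix.mulVec, dotProduct, Fin.sum_univ_three]
    · rw [e00, e11]
      simp only [abs_zero, neg_zero]
      nlinarith [hcc, hcpos]
    · rw [e20, ← habs]
      have hP : (!![c, 0, c; 0, 1, 0; -c, 0, c] *ᵥ ![-aX, 0, aZ]) 0 = c * (aZ - aX) := by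
        simp [Matrix.mulVec, dotProduct, Fin.sum_univ_three]; ring
      rw [hP]
      -- c*(aZ-aX) ≤ -(c*c*(aXX+1)), i.e. c*c*(aXX+1) ≤ c*(aX-aZ) ⇔ c*(aXX+1) ≤ aX-aZ
      have : c * (aXX + 1) ≤ aX - aZ := by
        have h10 : c * (Real.sqrt 2 * (aX - aZ)) = aX - aZ := by
          rw [hc]; field_simp; nlinarith [hs2]
        nlinarith [hkey, hcpos]
      nlinarith [hcpos]
    · rw [e02, abs_neg, ← habs]
      have hS : (!![c, 0, -c; 0, 1, 0; c, 0, c] *ᵥ ![-aX, 0, aZ]) 0 = -(c * (aX + aZ)) := by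
        simp [Matrix.mulVec, dotProduct, Fin.sum_univ_three]; ring
      rw [hS]
      have : c * (aXX + 1) ≤ aX + aZ := by
        have h10 : c * (Real.sqrt 2 * (aX - aZ)) = aX - aZ := by
          rw [hc]; field_simp; nlinarith [hs2]
        nlinarith [hkey, hcpos]
      nlinarith [hcpos]
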